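/- Let Σ and Λ be real d×d positive semidefinite matrices with unit diagonal, and let f_1,…,f_d and g_1,…,g_d be strictly increasing continuous bijections from ℝ to ℝ. Let P be the pushforward of the centered multivariate Gaussian N_d(0, Σ) under z ↦ (f_1^{−1}(z_1),…,f_d^{−1}(z_d)) and Q the pushforward of N_d(0, Λ) under z ↦ (g_1^{−1}(z_1),…,g_d^{−1}(z_d)), and assume P and Q have finite second moments. Define the squared nonparanormal transport distance d_NPT²(P,Q) = Σ_{j=1}^d d_W²(P_j, Q_j) + Tr[Σ + Λ − 2 (Σ^{1/2} Λ Σ^{1/2})^{1/2}], where P_j and Q_j denote the j-th coordinate marginals of P and Q. If d_NPT²(P,Q) = 0, then P = Q. -/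

import Mathlib

open MeasureTheory ProbabilityTheory Matrix
open scoped Classical

/-- The unique positive semidefinite square root of a positive semidefinite real matrix
(junk value `0` if the matrix is not positive semidefinite). -/
noncomputable def psdSqrt {d : ℕ} (M : Matrix (Fin d) (Fin d) ℝ) : Matrix (Fin d) (Fin d) ℝ :=
  if h : M.PosSemidef then
    (h.1.eigenvectorUnitary : Matrix (Fin d) (Fin d) ℝ) *
      diagonal ((↑) ∘ (Real.sqrt ·) ∘ h.1.eigenvalues) *
      (star h.1.eigenvectorUnitary : Matrix (Fin d) (Fin d) ℝ)
  else 0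

/-- The squared Bures distance `Tr[A + B − 2 (A^{1/2} B A^{1/2})^{1/2}]`. -/
noncomputable def buresSq {d : ℕ} (A B : Matrix (Fin d) (Fin d) ℝ) : ℝ :=
  (A + B - 2 • psdSqrt (psdSqrt A * B * psdSqrt A)).trace

/-- Squared 2-Wasserstein distance between Borel probability measures on ℝ:
the infimum over couplings `γ` of `∫ |x − y|² dγ`. -/
noncomputable def W2sq (P Q : Measure ℝ) : ℝ :=
  sInf { r : ℝ | ∃ γ : Measure (ℝ × ℝ), IsProbabilityMeasure γ ∧
    γ.map Prod.fst = P ∧ γ.map Prod.snd = Q ∧ r = ∫ p, (p.1 - p.2) ^ 2 ∂γ }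

/-- The multivariate Gaussian measure `N_d(m, S)` on ℝ^d with mean `m` and positive
semidefinite covariance `S`, realized as the pushforward of the standard Gaussian
under `x ↦ m + S^{1/2} x`. -/
noncomputable def gaussianPi (d : ℕ) (m : Fin d → ℝ) (S : Matrix (Fin d) (Fin d) ℝ) :
    Measure (Fin d → ℝ) :=
  (Measure.pi fun _ : Fin d => gaussianReal 0 1).map fun x => m + (psdSqrt S).mulVec x

/-!
The Bures term vanishes only when `Σ = Λ`. With `A = Σ^{1/2}`, `B = Λ^{1/2}` and a partial
isometry `U` with `Uᴴ B A = |B A| = (A Λ A)^{1/2}`, it equals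
`‖A − B U‖²_F + Tr[B (1 − U Uᴴ) B]`, a sum of two nonnegative terms whose vanishing gives
`A = B U` and `Λ = B U Uᴴ B = A Aᴴ = Σ`. A vanishing Wasserstein term forces equal marginals,
because couplings of arbitrarily small quadratic cost squeeze the two distribution functions
together. Once the latent Gaussian is common, the `j`-th marginals of `P` and `Q` are the
pushforwards of one law under the increasing homeomorphisms `f_j⁻¹` and `g_j⁻¹`, which must
therefore agree almost everywhere; hence `P = Q`.
-/

section Bures

open scoped MatrixOrder

variable {n : Type*} [Fintype n] [DecidableEq n]

theorem psdSqrt_eq_cfcSqrt {d : ℕ} {M : Matrix (Fin d) (Fin d) ℝ} (hM : M.PosSemidef) :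
    psdSqrt M = CFC.sqrt M := by
  rw [psdSqrt, dif_pos hM, CFC.sqrt_eq_cfc, cfc_nnreal_eq_real _ M, hM.1.cfc_eq,
    IsHermitian.cfc, Unitary.conjStarAlgAut_apply]
  congr 3
  ext i
  simp [hM.eigenvalues_nonneg i]

theorem Matrix.cfc_mul_real (f g : ℝ → ℝ) (A : Matrix n n ℝ) :
    cfc (fun x => f x * g x) A = cfc f A * cfc g A :=
  cfc_mul f g A (A.finite_real_spectrum.continuousOn f) (A.finite_real_spectrum.continuousOn g)

/-- The witness is `U = M C⁺`, where `C⁺ = cfc (·⁻¹) C` is the Moore–Penrose inverse of `C`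
(because `(0 : ℝ)⁻¹ = 0`). -/
theorem Matrix.exists_isStarProjection_conjTranspose_mul_eq {M C : Matrix n n ℝ}
    (hC : IsSelfAdjoint C) (hCM : C * C = Mᴴ * M) :
    ∃ U : Matrix n n ℝ, Uᴴ * M = C ∧ IsStarProjection (U * Uᴴ) := by
  set D := cfc (·⁻¹ : ℝ → ℝ) C
  have hD : Dᴴ = D := (cfc_predicate _ C : IsSelfAdjoint D)
  have hDCC : D * (C * C) = C := by
    calc D * (C * C) = cfc (fun x : ℝ => x⁻¹ * x * x) C := by
          rw [Matrix.cfc_mul_real, Matrix.cfc_mul_real, cfc_id' ℝ C, Matrix.mul_assoc]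
      _ = C := (cfc_congr fun x _ => inv_mul_mul_self x).trans (cfc_id' ℝ C)
  have hDD : D * D * (C * C) * (D * D) = D * D := by
    calc D * D * (C * C) * (D * D)
      _ = cfc (fun x : ℝ => x⁻¹ * x⁻¹ * (x * x) * (x⁻¹ * x⁻¹)) C := by
          simp only [Matrix.cfc_mul_real, cfc_id' ℝ C]; rfl
      _ = cfc (fun x : ℝ => x⁻¹ * x⁻¹) C := cfc_congr fun x _ => by
          rcases eq_or_ne x 0 with rfl | hx
          · simp
          · field_simp
      _ = D * D := Matrix.cfc_mul_real _ _ C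
  refine ⟨M * D, by rw [conjTranspose_mul, hD, Matrix.mul_assoc, ← hCM, hDCC], ?_, ?_⟩
  · calc M * D * (M * D)ᴴ * (M * D * (M * D)ᴴ) = M * (D * D * (C * C) * (D * D)) * Mᴴ := by
          rw [hCM, conjTranspose_mul, hD]; noncomm_ring
      _ = M * D * (M * D)ᴴ := by rw [hDD, conjTranspose_mul, hD]; noncomm_ring
  · simpa only [star_eq_conjTranspose] using IsSelfAdjoint.mul_star_self (M * D)

theorem Matrix.trace_mul_self_add_sub_two_trace {A B C U : Matrix n n ℝ} (hA : Aᴴ = A)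
    (hB : Bᴴ = B) (hU : Uᴴ * (B * A) = C) :
    (A * A).trace + (B * B).trace - 2 * C.trace =
      ((A - B * U)ᴴ * (A - B * U)).trace + (B * (1 - U * Uᴴ) * B).trace := by
  have hABU : (A * (B * U)).trace = C.trace := by
    rw [← hU, ← star_trivial (trace _), ← trace_conjTranspose]
    simp only [conjTranspose_mul, hA, hB, Matrix.mul_assoc]
  have hUBBU : (Uᴴ * (B * (B * U))).trace = (B * (U * Uᴴ) * B).trace := by
    rw [trace_mul_comm, trace_mul_comm _ B]; simp only [Matrix.mul_assoc]
  have hexp : (A - B * U)ᴴ * (A - B * U) =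
      A * A - A * (B * U) - Uᴴ * (B * A) + Uᴴ * (B * (B * U)) := by
    rw [conjTranspose_sub, conjTranspose_mul, hA, hB]; noncomm_ring
  rw [hexp, Matrix.mul_sub, Matrix.sub_mul, Matrix.mul_one]
  simp only [trace_add, trace_sub, hABU, hU, hUBBU]
  ring

variable {d : ℕ} {S L : Matrix (Fin d) (Fin d) ℝ}

theorem exists_buresSq_eq_trace_add_trace (hS : S.PosSemidef) (hL : L.PosSemidef) :
    ∃ U : Matrix (Fin d) (Fin d) ℝ,
      (CFC.sqrt L * (1 - U * Uᴴ) * CFC.sqrt L).PosSemidef ∧ buresSq S L =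
      ((CFC.sqrt S - CFC.sqrt L * U)ᴴ * (CFC.sqrt S - CFC.sqrt L * U)).trace +
        (CFC.sqrt L * (1 - U * Uᴴ) * CFC.sqrt L).trace := by
  set A := CFC.sqrt S
  set B := CFC.sqrt L
  have hA : Aᴴ = A := (CFC.sqrt_nonneg S).isSelfAdjoint
  have hB : Bᴴ = B := (CFC.sqrt_nonneg L).isSelfAdjoint
  have hALA : (A * L * A).PosSemidef := by
    simpa only [hA] using hL.conjTranspose_mul_mul_same A
  set C := CFC.sqrt (A * L * A)
  have hCM : C * C = (B * A)ᴴ * (B * A) := by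
    rw [CFC.sqrt_mul_sqrt_self _ hALA.nonneg, conjTranspose_mul, hA, hB,
      ← CFC.sqrt_mul_sqrt_self L hL.nonneg]
    noncomm_ring
  obtain ⟨U, hU, hW⟩ :=
    Matrix.exists_isStarProjection_conjTranspose_mul_eq (CFC.sqrt_nonneg _).isSelfAdjoint hCM
  refine ⟨U, by simpa only [hB] using hW.one_sub_nonneg.posSemidef.conjTranspose_mul_mul_same B, ?_⟩
  rw [← Matrix.trace_mul_self_add_sub_two_trace hA hB hU, CFC.sqrt_mul_sqrt_self S hS.nonneg,
    CFC.sqrt_mul_sqrt_self L hL.nonneg, buresSq, psdSqrt_eq_cfcSqrt hS, psdSqrt_eq_cfcSqrt hALA,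
    trace_sub, trace_add, trace_smul, nsmul_eq_mul, Nat.cast_ofNat]

theorem buresSq_nonneg (hS : S.PosSemidef) (hL : L.PosSemidef) : 0 ≤ buresSq S L := by
  obtain ⟨U, hY, hBures⟩ := exists_buresSq_eq_trace_add_trace hS hL
  rw [hBures]
  exact add_nonneg (posSemidef_conjTranspose_mul_self _).trace_nonneg hY.trace_nonneg

theorem eq_of_buresSq_eq_zero (hS : S.PosSemidef) (hL : L.PosSemidef) (h : buresSq S L = 0) :
    S = L := by
  obtain ⟨U, hY, hBures⟩ := exists_buresSq_eq_trace_add_trace hS hL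
  set A := CFC.sqrt S
  set B := CFC.sqrt L
  have hX := posSemidef_conjTranspose_mul_self (A - B * U)
  obtain ⟨hX0, hY0⟩ := (add_eq_zero_iff_of_nonneg hX.trace_nonneg hY.trace_nonneg).mp (hBures ▸ h)
  have hAU : A = B * U :=
    sub_eq_zero.mp (conjTranspose_mul_self_eq_zero.mp (hX.trace_eq_zero_iff.mp hX0))
  have hA : Aᴴ = A := (CFC.sqrt_nonneg S).isSelfAdjoint
  have hB : Bᴴ = B := (CFC.sqrt_nonneg L).isSelfAdjoint
  calc S = A * Aᴴ := by rw [hA, CFC.sqrt_mul_sqrt_self S hS.nonneg]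
    _ = B * B - B * (1 - U * Uᴴ) * B := by rw [hAU, conjTranspose_mul, hB]; noncomm_ring
    _ = L := by rw [hY.trace_eq_zero_iff.mp hY0, sub_zero, CFC.sqrt_mul_sqrt_self L hL.nonneg]

end Bures

section Wasserstein

open Set

theorem W2sq_nonneg (P Q : Measure ℝ) : 0 ≤ W2sq P Q :=
  Real.sInf_nonneg fun _ ⟨_, _, _, _, hr⟩ => hr ▸ integral_nonneg fun _ => sq_nonneg _

theorem W2sq_comm (P Q : Measure ℝ) : W2sq P Q = W2sq Q P := by
  suffices h : ∀ P Q : Measure ℝ, { r : ℝ | ∃ γ : Measure (ℝ × ℝ), IsProbabilityMeasure γ ∧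
      γ.map Prod.fst = P ∧ γ.map Prod.snd = Q ∧ r = ∫ p, (p.1 - p.2) ^ 2 ∂γ } ⊆
      { r : ℝ | ∃ γ : Measure (ℝ × ℝ), IsProbabilityMeasure γ ∧
      γ.map Prod.fst = Q ∧ γ.map Prod.snd = P ∧ r = ∫ p, (p.1 - p.2) ^ 2 ∂γ } by
    rw [W2sq, W2sq, (h P Q).antisymm (h Q P)]
  rintro P Q _ ⟨γ, hγ, hfst, hsnd, rfl⟩
  refine ⟨γ.map Prod.swap, Measure.isProbabilityMeasure_map measurable_swap.aemeasurable,
    by rwa [Measure.map_map measurable_fst measurable_swap],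
    by rwa [Measure.map_map measurable_snd measurable_swap], ?_⟩
  rw [integral_map measurable_swap.aemeasurable (by fun_prop)]
  exact integral_congr_ae (ae_of_all _ fun p => by simp only [Prod.fst_swap, Prod.snd_swap]; ring)

variable {P Q : Measure ℝ}

theorem exists_coupling_integral_lt_of_W2sq_lt [IsProbabilityMeasure P] [IsProbabilityMeasure Q]
    {ε : ℝ} (h : W2sq P Q < ε) :
    ∃ γ : Measure (ℝ × ℝ), IsProbabilityMeasure γ ∧ γ.map Prod.fst = P ∧ γ.map Prod.snd = Q ∧
      ∫ p, (p.1 - p.2) ^ 2 ∂γ < ε := by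
  rw [W2sq] at h
  obtain ⟨_, ⟨γ, hγ, hfst, hsnd, rfl⟩, hlt⟩ :=
    exists_lt_of_csInf_lt (by exact ⟨_, P.prod Q, inferInstance, by simp, by simp, rfl⟩) h
  exact ⟨γ, hγ, hfst, hsnd, hlt⟩

theorem integrable_sq_sub_of_map_eq {γ : Measure (ℝ × ℝ)} (hfst : γ.map Prod.fst = P)
    (hsnd : γ.map Prod.snd = Q) (hP2 : Integrable (fun x => x ^ 2) P)
    (hQ2 : Integrable (fun x => x ^ 2) Q) :
    Integrable (fun p : ℝ × ℝ => (p.1 - p.2) ^ 2) γ := by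
  have h1 := (hfst ▸ hP2).comp_measurable measurable_fst
  have h2 := (hsnd ▸ hQ2).comp_measurable measurable_snd
  refine ((h1.const_mul 2).add (h2.const_mul 2)).mono' (by fun_prop) (ae_of_all _ fun p => ?_)
  rw [Real.norm_eq_abs, abs_of_nonneg (sq_nonneg (p.1 - p.2))]
  simp only [Pi.add_apply, Function.comp_apply]
  nlinarith [sq_nonneg (p.1 + p.2)]

/-- Markov's inequality for the coupling bounds the mass that can move by `δ` or more. -/
theorem measureReal_Iic_le_of_coupling {γ : Measure (ℝ × ℝ)} [IsFiniteMeasure γ]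
    (hfst : γ.map Prod.fst = P) (hsnd : γ.map Prod.snd = Q)
    (hcost : Integrable (fun p : ℝ × ℝ => (p.1 - p.2) ^ 2) γ) (t : ℝ) {δ : ℝ} (hδ : 0 < δ) :
    P.real (Iic t) ≤ Q.real (Iic (t + δ)) + (∫ p, (p.1 - p.2) ^ 2 ∂γ) / δ ^ 2 := by
  have hmarkov : γ.real {p | δ ^ 2 ≤ (p.1 - p.2) ^ 2} ≤ (∫ p, (p.1 - p.2) ^ 2 ∂γ) / δ ^ 2 := by
    rw [le_div_iff₀ (by positivity), mul_comm]
    exact mul_meas_ge_le_integral_of_nonneg (ae_of_all _ fun _ => sq_nonneg _) hcost _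
  have hsub : {p : ℝ × ℝ | p.1 ≤ t} ⊆
      {p | p.2 ≤ t + δ} ∪ {p | δ ^ 2 ≤ (p.1 - p.2) ^ 2} := by
    intro p (hp : p.1 ≤ t)
    rcases le_or_gt p.2 (t + δ) with hclose | hfar
    · exact Or.inl hclose
    · exact Or.inr (show δ ^ 2 ≤ (p.1 - p.2) ^ 2 by nlinarith)
  calc P.real (Iic t) = γ.real {p | p.1 ≤ t} := by
        rw [← hfst, map_measureReal_apply measurable_fst measurableSet_Iic]; rfl
    _ ≤ γ.real {p | p.2 ≤ t + δ} + γ.real {p | δ ^ 2 ≤ (p.1 - p.2) ^ 2} :=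
        (measureReal_mono hsub).trans (measureReal_union_le _ _)
    _ ≤ Q.real (Iic (t + δ)) + (∫ p, (p.1 - p.2) ^ 2 ∂γ) / δ ^ 2 := by
        rw [← hsnd, map_measureReal_apply measurable_snd measurableSet_Iic]
        exact add_le_add le_rfl hmarkov

theorem cdf_le_cdf_of_W2sq_eq_zero [IsProbabilityMeasure P] [IsProbabilityMeasure Q]
    (hP2 : Integrable (fun x => x ^ 2) P) (hQ2 : Integrable (fun x => x ^ 2) Q)
    (h : W2sq P Q = 0) (t : ℝ) : cdf P t ≤ cdf Q t := by
  have hshift : ∀ δ > 0, cdf P t ≤ cdf Q (t + δ) := by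
    intro δ hδ
    rw [cdf_eq_real, cdf_eq_real]
    refine le_of_forall_pos_le_add fun ε hε => ?_
    obtain ⟨γ, hγ, hfst, hsnd, hlt⟩ :=
      exists_coupling_integral_lt_of_W2sq_lt (h.trans_lt (by positivity : 0 < ε * δ ^ 2))
    calc P.real (Iic t) ≤ Q.real (Iic (t + δ)) + (∫ p, (p.1 - p.2) ^ 2 ∂γ) / δ ^ 2 :=
          measureReal_Iic_le_of_coupling hfst hsnd
            (integrable_sq_sub_of_map_eq hfst hsnd hP2 hQ2) t hδ
      _ ≤ Q.real (Iic (t + δ)) + ε := by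
          gcongr
          exact (div_le_iff₀ (by positivity)).mpr hlt.le
  refine ge_of_tendsto (((cdf Q).right_continuous t).mono Ioi_subset_Ici_self).tendsto ?_
  filter_upwards [self_mem_nhdsWithin] with x (hx : t < x)
  simpa using hshift (x - t) (sub_pos.mpr hx)

theorem eq_of_W2sq_eq_zero [IsProbabilityMeasure P] [IsProbabilityMeasure Q]
    (hP2 : Integrable (fun x => x ^ 2) P) (hQ2 : Integrable (fun x => x ^ 2) Q)
    (h : W2sq P Q = 0) : P = Q :=
  Measure.eq_of_cdf P Q <| StieltjesFunction.ext fun t =>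
    le_antisymm (cdf_le_cdf_of_W2sq_eq_zero hP2 hQ2 h t)
      (cdf_le_cdf_of_W2sq_eq_zero hQ2 hP2 ((W2sq_comm Q P).trans h) t)

end Wasserstein

section MonotoneTransport

open Set

variable {μ : Measure ℝ} [IsFiniteMeasure μ] {h k : ℝ → ℝ}

/-- If `h t < k t`, a rational `q < t` close to `t` has `h q < h t < k q`, and the interval
`(h q, k q]` carries no mass of the common law since `μ(Iic q)` is its mass below both ends. -/
theorem measure_setOf_lt_eq_zero_of_map_eq (hh : StrictMono h) (hk : StrictMono k)
    (hkc : Continuous k) (heq : μ.map h = μ.map k) : μ {t | h t < k t} = 0 := by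
  have hIic : ∀ {φ : ℝ → ℝ}, StrictMono φ → ∀ q : ℝ, (μ.map φ) (Iic (φ q)) = μ (Iic q) :=
    fun hφ q => by
      rw [Measure.map_apply hφ.monotone.measurable measurableSet_Iic]
      exact congrArg μ (Set.ext fun _ => hφ.le_iff_le)
  have hnull : ∀ q : ℚ, (μ.map h) (Ioc (h q) (k q)) = 0 := by
    intro q
    rcases lt_or_ge (h q) (k q) with hlt | hle
    · rw [← Iic_sdiff_Iic, measure_sdiff (Iic_subset_Iic.mpr hlt.le)
        measurableSet_Iic.nullMeasurableSet (measure_ne_top _ _), hIic hh, heq, hIic hk,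
        tsub_self]
    · rw [Ioc_eq_empty (not_lt.mpr hle), measure_empty]
  have hsub : {t | h t < k t} ⊆ h ⁻¹' ⋃ q : ℚ, Ioc (h q) (k q) := by
    intro t (ht : h t < k t)
    obtain ⟨δ, hδ, hball⟩ :=
      Metric.eventually_nhds_iff.mp ((hkc.tendsto t).eventually_const_lt ht)
    obtain ⟨q, hq₁, hq₂⟩ := exists_rat_btwn (sub_lt_self t hδ)
    refine mem_iUnion.mpr ⟨q, hh hq₂, (hball ?_).le⟩
    rw [Real.dist_eq, abs_lt]
    constructor <;> linarith
  refine measure_mono_null hsub ?_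
  rw [← Measure.map_apply hh.monotone.measurable (.iUnion fun _ => measurableSet_Ioc)]
  exact measure_iUnion_null hnull

theorem ae_eq_of_map_eq_of_strictMono (hh : StrictMono h) (hk : StrictMono k)
    (hhc : Continuous h) (hkc : Continuous k) (heq : μ.map h = μ.map k) : h =ᵐ[μ] k := by
  have hnull := measure_union_null (measure_setOf_lt_eq_zero_of_map_eq hh hk hkc heq)
    (measure_setOf_lt_eq_zero_of_map_eq hk hh hhc heq.symm)
  exact measure_mono_null (fun t (ht : h t ≠ k t) => ht.lt_or_gt) hnull

end MonotoneTransport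

section InverseFunction

variable {f : ℝ → ℝ}

theorem StrictMono.invFun_eq_orderIsoOfSurjective_symm (hf : StrictMono f)
    (hsurj : Function.Surjective f) :
    Function.invFun f = (hf.orderIsoOfSurjective f hsurj).symm :=
  funext fun y => hf.injective <| by
    rw [Function.invFun_eq (hsurj y)]
    exact ((hf.orderIsoOfSurjective f hsurj).apply_symm_apply y).symm

theorem StrictMono.strictMono_invFun (hf : StrictMono f) (hsurj : Function.Surjective f) :
    StrictMono (Function.invFun f) :=
  hf.invFun_eq_orderIsoOfSurjective_symm hsurj ▸ OrderIso.strictMono _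

theorem StrictMono.continuous_invFun (hf : StrictMono f) (hsurj : Function.Surjective f) :
    Continuous (Function.invFun f) :=
  hf.invFun_eq_orderIsoOfSurjective_symm hsurj ▸ OrderIso.continuous _

end InverseFunction

section Coordinatewise

variable {ι : Type*} {μ : Measure (ι → ℝ)} {φ ψ : ι → ℝ → ℝ}

theorem measurable_coordinatewise (hφ : ∀ i, Measurable (φ i)) :
    Measurable fun (z : ι → ℝ) i => φ i (z i) :=
  measurable_pi_lambda _ fun i => (hφ i).comp (measurable_pi_apply i)

theorem map_eval_map_coordinatewise (hφ : ∀ i, Measurable (φ i)) (j : ι) :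
    (μ.map fun z i => φ i (z i)).map (fun x => x j) = (μ.map fun z => z j).map (φ j) := by
  rw [Measure.map_map (measurable_pi_apply j) (measurable_coordinatewise hφ),
    Measure.map_map (hφ j) (measurable_pi_apply j)]
  rfl

theorem map_coordinatewise_congr [Countable ι] (h : ∀ i, φ i =ᵐ[μ.map fun z => z i] ψ i) :
    μ.map (fun z i => φ i (z i)) = μ.map fun z i => ψ i (z i) := by
  refine Measure.map_congr ?_
  filter_upwards [ae_all_iff.mpr fun i => ae_of_ae_map (measurable_pi_apply i).aemeasurable (h i)]
    with z hz
  exact funext hz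

theorem MeasureTheory.Integrable.sq_map_eval [Fintype ι]
    (hμ : Integrable (fun x => ∑ i, x i ^ 2) μ) (j : ι) :
    Integrable (fun x : ℝ => x ^ 2) (μ.map fun x => x j) := by
  refine (integrable_map_measure (continuous_pow 2).aestronglyMeasurable
    (measurable_pi_apply j).aemeasurable).mpr
    (hμ.mono' ((measurable_pi_apply j).pow_const 2).aestronglyMeasurable (ae_of_all _ fun x => ?_))
  rw [Function.comp_apply, Real.norm_eq_abs, abs_of_nonneg (sq_nonneg _)]
  exact Finset.single_le_sum (fun i _ => sq_nonneg (x i)) (Finset.mem_univ j)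

theorem map_eval_eq_of_W2sq_eq_zero [Fintype ι] {P Q : Measure (ι → ℝ)}
    [IsProbabilityMeasure P] [IsProbabilityMeasure Q] (hP2 : Integrable (fun x => ∑ i, x i ^ 2) P)
    (hQ2 : Integrable (fun x => ∑ i, x i ^ 2) Q) (j : ι)
    (h : W2sq (P.map fun x => x j) (Q.map fun x => x j) = 0) :
    P.map (fun x => x j) = Q.map fun x => x j :=
  haveI := Measure.isProbabilityMeasure_map (μ := P) (measurable_pi_apply j).aemeasurable
  haveI := Measure.isProbabilityMeasure_map (μ := Q) (measurable_pi_apply j).aemeasurable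
  eq_of_W2sq_eq_zero (hP2.sq_map_eval j) (hQ2.sq_map_eval j) h

end Coordinatewise

instance isProbabilityMeasure_gaussianPi (d : ℕ) (m : Fin d → ℝ)
    (S : Matrix (Fin d) (Fin d) ℝ) : IsProbabilityMeasure (gaussianPi d m S) :=
  Measure.isProbabilityMeasure_map (by fun_prop)

theorem stmt15_general (d : ℕ) (S L : Matrix (Fin d) (Fin d) ℝ)
    (hS : S.PosSemidef) (hL : L.PosSemidef)
    (f g : Fin d → ℝ → ℝ)
    (hf₁ : ∀ j, StrictMono (f j))
    (hf₃ : ∀ j, Function.Bijective (f j))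
    (hg₁ : ∀ j, StrictMono (g j))
    (hg₃ : ∀ j, Function.Bijective (g j))
    (P Q : Measure (Fin d → ℝ))
    (hP : P = (gaussianPi d 0 S).map fun z i => Function.invFun (f i) (z i))
    (hQ : Q = (gaussianPi d 0 L).map fun z i => Function.invFun (g i) (z i))
    (hP2 : Integrable (fun x => ∑ j, (x j) ^ 2) P)
    (hQ2 : Integrable (fun x => ∑ j, (x j) ^ 2) Q)
    (h0 : ∑ j, W2sq (P.map fun x => x j) (Q.map fun x => x j) + buresSq S L = 0) :
    P = Q := by
  have hfc j := (hf₁ j).continuous_invFun (hf₃ j).2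
  have hgc j := (hg₁ j).continuous_invFun (hg₃ j).2
  obtain ⟨hW, hB⟩ := (add_eq_zero_iff_of_nonneg (Finset.sum_nonneg fun j _ => W2sq_nonneg _ _)
    (buresSq_nonneg hS hL)).mp h0
  obtain rfl : S = L := eq_of_buresSq_eq_zero hS hL hB
  have : IsProbabilityMeasure P := hP ▸ Measure.isProbabilityMeasure_map
    (measurable_coordinatewise fun i => (hfc i).measurable).aemeasurable
  have : IsProbabilityMeasure Q := hQ ▸ Measure.isProbabilityMeasure_map
    (measurable_coordinatewise fun i => (hgc i).measurable).aemeasurable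
  have hmarg j : P.map (fun x => x j) = Q.map fun x => x j :=
    map_eval_eq_of_W2sq_eq_zero hP2 hQ2 j
      ((Finset.sum_eq_zero_iff_of_nonneg fun j _ => W2sq_nonneg _ _).mp hW j (Finset.mem_univ j))
  subst hP hQ
  refine map_coordinatewise_congr fun j => ae_eq_of_map_eq_of_strictMono
    ((hf₁ j).strictMono_invFun (hf₃ j).2) ((hg₁ j).strictMono_invFun (hg₃ j).2) (hfc j) (hgc j) ?_
  rw [← map_eval_map_coordinatewise (fun i => (hfc i).measurable),
    ← map_eval_map_coordinatewise (fun i => (hgc i).measurable)]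
  exact hmarg j

/-- identity of indiscernibles for the squared nonparanormal transport distance
`d_NPT²(P,Q) = ∑_j d_W²(P_j, Q_j) + Tr[Σ + Λ − 2 (Σ^{1/2} Λ Σ^{1/2})^{1/2}]`:
if `d_NPT²(P,Q) = 0` for nonparanormal `P, Q` with finite second moments, then `P = Q`. -/
theorem stmt15 (d : ℕ) (S L : Matrix (Fin d) (Fin d) ℝ)
    (hS : S.PosSemidef) (hL : L.PosSemidef)
    (hSd : ∀ j, S j j = 1) (hLd : ∀ j, L j j = 1)
    (f g : Fin d → ℝ → ℝ)
    (hf₁ : ∀ j, StrictMono (f j)) (hf₂ : ∀ j, Continuous (f j))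
    (hf₃ : ∀ j, Function.Bijective (f j))
    (hg₁ : ∀ j, StrictMono (g j)) (hg₂ : ∀ j, Continuous (g j))
    (hg₃ : ∀ j, Function.Bijective (g j))
    (P Q : Measure (Fin d → ℝ))
    (hP : P = (gaussianPi d 0 S).map fun z i => Function.invFun (f i) (z i))
    (hQ : Q = (gaussianPi d 0 L).map fun z i => Function.invFun (g i) (z i))
    (hP2 : Integrable (fun x => ∑ j, (x j) ^ 2) P)
    (hQ2 : Integrable (fun x => ∑ j, (x j) ^ 2) Q)
    (h0 : ∑ j, W2sq (P.map fun x => x j) (Q.map fun x => x j) + buresSq S L = 0) :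
    P = Q :=
  stmt15_general d S L hS hL f g hf₁ hf₃ hg₁ hg₃ P Q hP hQ hP2 hQ2 h0
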